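/- arXiv:2204.03413 — 3 statements merged into one kernel-verified Lean document; each statement's English description precedes it below -/
import Mathlib

section
/- Let r ≥ 1 and let G be the complete graph on 2r+1 vertices with vertex set containing two distinguished vertices s and t. Let F be a set of edges of G such that in G \ F there exist r pairwise edge-disjoint paths from s to t. Then the distance between s and t in G \ F is at most 2. -/
/-- There exist `r` pairwise edge-disjoint paths from `s` to `t` in `G`. -/
def EdgeDisjointPaths {V : Type} (G : SimpleGraph V) (s t : V) (r : ℕ) : Prop :=
  ∃ p : Fin r → G.Walk s t, (∀ i, (p i).IsPath) ∧
    ∀ i j, i ≠ j → ∀ e, e ∈ (p i).edges → e ∉ (p j).edges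

/-!
Edge-disjoint `s`–`t` walks leave `s` through pairwise distinct edges, so `r` of them give `s`
at least `r` neighbours, and likewise `t`. If `s` and `t` are not adjacent, all these neighbours
lie among the `2r - 1` vertices other than `s` and `t`, so `s` and `t` share a neighbour.
-/

namespace SimpleGraph

variable {V : Type} {G : SimpleGraph V} {s t : V}

lemma commonNeighbors_nonempty_of_card_lt [Fintype V] [DecidableRel G.Adj] (hst : s ≠ t)
    (hadj : ¬ G.Adj s t) (hcard : Fintype.card V < G.degree s + G.degree t + 2) :
    (G.commonNeighbors s t).Nonempty := by
  classical
  have hsub {u w : V} (huw : u ≠ w) (hadj : ¬ G.Adj u w) :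
      G.neighborFinset u ⊆ ({u, w} : Finset V)ᶜ := by
    intro v hv
    rw [mem_neighborFinset] at hv
    simp only [Finset.mem_compl, Finset.mem_insert, Finset.mem_singleton, not_or]
    exact ⟨hv.ne.symm, by rintro rfl; exact hadj hv⟩
  have hcompl : ({s, t} : Finset V)ᶜ.card + 2 = Fintype.card V := by
    rw [← Finset.card_pair hst, Finset.card_compl_add_card]
  obtain ⟨v, hv⟩ := Finset.inter_nonempty_of_card_lt_card_add_card (hsub hst hadj)
    (Finset.pair_comm s t ▸ hsub hst.symm (fun h => hadj h.symm))
    (by simp only [card_neighborFinset_eq_degree]; omega)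
  simp only [Finset.mem_inter, mem_neighborFinset] at hv
  exact ⟨v, hv.1, hv.2⟩

lemma dist_le_two_of_commonNeighbors_nonempty (h : (G.commonNeighbors s t).Nonempty) :
    G.dist s t ≤ 2 := by
  obtain ⟨v, hsv, htv⟩ := h
  exact dist_le (.cons hsv (.cons htv.symm .nil))

end SimpleGraph

namespace EdgeDisjointPaths

open SimpleGraph

variable {V : Type} {G : SimpleGraph V} {s t : V} {r : ℕ}

lemma symm (h : EdgeDisjointPaths G s t r) : EdgeDisjointPaths G t s r := by
  obtain ⟨p, hpath, hdisj⟩ := h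
  refine ⟨fun i => (p i).reverse, fun i => (hpath i).reverse, fun i j hij e hi hj => ?_⟩
  simp only [Walk.edges_reverse, List.mem_reverse] at hi hj
  exact hdisj i j hij e hi hj

lemma le_degree [Fintype V] [DecidableRel G.Adj] (hst : s ≠ t)
    (h : EdgeDisjointPaths G s t r) : r ≤ G.degree s := by
  obtain ⟨p, -, hdisj⟩ := h
  have hnil (i : Fin r) : ¬ (p i).Nil := Walk.not_nil_of_ne hst
  have hsnd_inj : Function.Injective fun i => (p i).snd := by
    intro i j (hij : (p i).snd = (p j).snd)
    by_contra hne
    have hj := Walk.mk_start_snd_mem_edges (hnil j)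
    rw [← hij] at hj
    exact hdisj i j hne _ (Walk.mk_start_snd_mem_edges (hnil i)) hj
  simpa using Finset.card_le_card_of_injOn (s := Finset.univ) (fun i => (p i).snd)
    (fun i _ => (mem_neighborFinset ..).mpr ((p i).adj_snd (hnil i))) hsnd_inj.injOn

theorem dist_le_two [Fintype V] (hst : s ≠ t) (h : EdgeDisjointPaths G s t r)
    (hcard : Fintype.card V ≤ 2 * r + 1) : G.dist s t ≤ 2 := by
  classical
  by_cases hadj : G.Adj s t
  · rw [dist_eq_one_iff_adj.mpr hadj]
    norm_num
  · refine dist_le_two_of_commonNeighbors_nonempty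
      (commonNeighbors_nonempty_of_card_lt hst hadj ?_)
    have := h.le_degree hst
    have := h.symm.le_degree hst.symm
    omega

end EdgeDisjointPaths

theorem stmt0_general (r : ℕ) (s t : Fin (2 * r + 1)) (hst : s ≠ t)
    (F : Set (Sym2 (Fin (2 * r + 1))))
    (h : EdgeDisjointPaths ((SimpleGraph.completeGraph (Fin (2 * r + 1))).deleteEdges F) s t r) :
    ((SimpleGraph.completeGraph (Fin (2 * r + 1))).deleteEdges F).dist s t ≤ 2 :=
  h.dist_le_two hst (by simp)

theorem stmt0 (r : ℕ) (hr : 1 ≤ r) (s t : Fin (2 * r + 1)) (hst : s ≠ t)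
    (F : Set (Sym2 (Fin (2 * r + 1))))
    (h : EdgeDisjointPaths ((SimpleGraph.completeGraph (Fin (2 * r + 1))).deleteEdges F) s t r) :
    ((SimpleGraph.completeGraph (Fin (2 * r + 1))).deleteEdges F).dist s t ≤ 2 :=
  stmt0_general r s t hst F h
end

section
/- For every k ≥ 1, the complete graph K_{2k+1} contains k pairwise edge-disjoint Hamiltonian cycles; in fact, its edge set decomposes into exactly k Hamiltonian cycles. -/
/-!
Walecki's construction. Take the vertex `2k` of `K_{2k+1}` as a hub and read the others modulo
`2k`. For `i < k` the `i`-th cycle runs from the hub along the zigzag `i, i + 1, i - 1, i + 2, …,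
i + k` and back to the hub. Its spokes end at `i` and `i + k`, and a rim edge between positions
`t` and `t + 1` has endpoint sum `2i + (t mod 2)` modulo `2k`, so every edge determines `i`: the
`k` cycles are edge-disjoint, and having `k(2k + 1)` edges between them they use every edge.
-/

open Finset

namespace SimpleGraph

variable {V : Type*} {G : SimpleGraph V}

namespace Walk

def ofSeq (f : ℕ → V) : (m : ℕ) → (∀ t < m, G.Adj (f t) (f (t + 1))) → G.Walk (f 0) (f m)
  | 0, _ => nil
  | m + 1, h => (ofSeq f m fun t ht => h t (by omega)).concat (h m (by omega))

variable (f : ℕ → V)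

@[simp]
lemma length_ofSeq (m : ℕ) (h : ∀ t < m, G.Adj (f t) (f (t + 1))) :
    (ofSeq f m h).length = m := by
  induction m with
  | zero => rfl
  | succ m ih => simp [ofSeq, ih]

lemma support_ofSeq (m : ℕ) (h : ∀ t < m, G.Adj (f t) (f (t + 1))) :
    (ofSeq f m h).support = (List.range (m + 1)).map f := by
  induction m with
  | zero => rfl
  | succ m ih => simp [ofSeq, support_concat, ih, List.range_succ]

lemma support_tail_ofSeq (m : ℕ) (h : ∀ t < m, G.Adj (f t) (f (t + 1))) :
    (ofSeq f m h).support.tail = (List.range m).map (fun t => f (t + 1)) := by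
  simp [support_ofSeq, List.range_succ_eq_map, Function.comp_def]

lemma edges_ofSeq (m : ℕ) (h : ∀ t < m, G.Adj (f t) (f (t + 1))) :
    (ofSeq f m h).edges = (List.range m).map (fun t => s(f t, f (t + 1))) := by
  induction m with
  | zero => rfl
  | succ m ih => simp [ofSeq, edges_concat, ih, List.range_succ]

lemma isHamiltonianCycle_of_support_tail_nodup [Fintype V] [DecidableEq V] {u : V}
    {p : G.Walk u u} (hnodup : p.support.tail.Nodup) (hlen : p.length = Fintype.card V)
    (h3 : 3 ≤ p.length) :
    p.IsHamiltonianCycle := by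
  have hnil : ¬ p.Nil := fun h => by have := length_eq_zero_iff.2 h; omega
  refine isHamiltonianCycle_iff_isCycle_and_length_eq.mpr ⟨?_, hlen⟩
  refine isCycle_iff_isPath_tail_and_le_length.mpr ⟨IsPath.mk' ?_, h3⟩
  rwa [support_tail_of_not_nil p hnil]

end Walk

theorem exists_mem_edges_of_pairwise_disjoint [Fintype G.edgeSet] {ι : Type*} [Fintype ι]
    {u w : ι → V} (p : ∀ i, G.Walk (u i) (w i)) (htrail : ∀ i, (p i).IsTrail)
    (hdisj : Pairwise fun i j => ∀ e ∈ (p i).edges, e ∉ (p j).edges)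
    (hlen : ∑ i, (p i).length = #G.edgeFinset) {e : Sym2 V} (he : e ∈ G.edgeSet) :
    ∃ i, e ∈ (p i).edges := by
  classical
  let E : ι → Finset (Sym2 V) := fun i => (p i).edges.toFinset
  have hcover : univ.biUnion E = G.edgeFinset := by
    refine eq_of_subset_of_card_le (fun a ha => ?_) ?_
    · obtain ⟨i, -, hai⟩ := mem_biUnion.1 ha
      exact mem_edgeFinset.2 ((p i).edges_subset_edgeSet (List.mem_toFinset.1 hai))
    · rw [card_biUnion fun i _ j _ hij => Finset.disjoint_left.2 fun _ hi hj =>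
        hdisj hij _ (List.mem_toFinset.1 hi) (List.mem_toFinset.1 hj)]
      simp only [List.toFinset_card_of_nodup (htrail _).edges_nodup, Walk.length_edges, hlen,
        le_refl]
  obtain ⟨i, -, hi⟩ := mem_biUnion.1 (hcover ▸ mem_edgeFinset.2 he)
  exact ⟨i, List.mem_toFinset.1 hi⟩

end SimpleGraph

/-- Position `t` of the `i`-th zigzag `∞, i, i + 1, i - 1, i + 2, i - 2, …, i + k, ∞`, where the
hub `∞` is the vertex `2k` and the rim `{0, …, 2k - 1}` is read modulo `2k`. -/
def waleckiVertex {k : ℕ} (i : Fin k) (t : ℕ) : Fin (2 * k + 1) :=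
  ⟨if t = 0 then 2 * k else if 2 * k < t then 2 * k
    else if t % 2 = 0 then i + t / 2
    else if t / 2 ≤ i then i - t / 2 else i + 2 * k - t / 2,
    by have := i.isLt; split_ifs <;> omega⟩

/-- A spoke from the hub to `i` or `i + k`, or a rim chord whose endpoints sum to `2i` or `2i + 1`
modulo `2k`. For `i < k` either description determines `i`. -/
def IsWaleckiEdge (k i x y : ℕ) : Prop :=
  (x = 2 * k ∨ y = 2 * k) ∧ (x + y = 2 * k + i ∨ x + y = 3 * k + i) ∨
    x < 2 * k ∧ y < 2 * k ∧
      (x + y = 2 * i ∨ x + y = 2 * i + 1 ∨ x + y = 2 * i + 2 * k ∨ x + y = 2 * i + 2 * k + 1)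

section Walecki

open SimpleGraph

variable {k : ℕ} (i : Fin k)

lemma waleckiVertex_zero : waleckiVertex i 0 = Fin.last (2 * k) := by
  simp [waleckiVertex, Fin.ext_iff]

lemma waleckiVertex_two_mul_add_one : waleckiVertex i (2 * k + 1) = Fin.last (2 * k) := by
  simp [waleckiVertex, Fin.ext_iff]

lemma waleckiVertex_injOn : Set.InjOn (waleckiVertex i) (Set.Icc 1 (2 * k + 1)) := by
  intro t ht s hs h
  simp only [Set.mem_Icc] at ht hs
  simp only [waleckiVertex, Fin.ext_iff] at h
  have := i.isLt
  split_ifs at h <;> omega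

lemma waleckiVertex_ne_succ {t : ℕ} (ht : t ≤ 2 * k) :
    waleckiVertex i t ≠ waleckiVertex i (t + 1) := by
  simp only [waleckiVertex, ne_eq, Fin.ext_iff]
  have := i.isLt
  split_ifs <;> first | contradiction | omega

lemma isWaleckiEdge_waleckiVertex {t : ℕ} (ht : t ≤ 2 * k) :
    IsWaleckiEdge k i (waleckiVertex i t) (waleckiVertex i (t + 1)) := by
  simp only [IsWaleckiEdge, waleckiVertex]
  have := i.isLt
  split_ifs <;> first | contradiction | omega

lemma eq_of_waleckiVertex_edge_eq {i j : Fin k} {t s : ℕ} (ht : t ≤ 2 * k) (hs : s ≤ 2 * k)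
    (h : s(waleckiVertex i t, waleckiVertex i (t + 1)) =
      s(waleckiVertex j s, waleckiVertex j (s + 1))) : i = j := by
  have hi := isWaleckiEdge_waleckiVertex i ht
  have hj := isWaleckiEdge_waleckiVertex j hs
  simp only [IsWaleckiEdge] at hi hj
  simp only [Sym2.eq_iff, Fin.ext_iff] at h
  have := i.isLt; have := j.isLt
  ext; omega

def waleckiCycle :
    (completeGraph (Fin (2 * k + 1))).Walk (Fin.last (2 * k)) (Fin.last (2 * k)) :=
  (Walk.ofSeq (waleckiVertex i) (2 * k + 1) fun _ ht => waleckiVertex_ne_succ i (by omega)).copy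
    (waleckiVertex_zero i) (waleckiVertex_two_mul_add_one i)

@[simp]
lemma length_waleckiCycle : (waleckiCycle i).length = 2 * k + 1 := by
  simp [waleckiCycle]

lemma edges_waleckiCycle : (waleckiCycle i).edges =
    (List.range (2 * k + 1)).map fun t => s(waleckiVertex i t, waleckiVertex i (t + 1)) := by
  simp [waleckiCycle, Walk.edges_ofSeq]

lemma isHamiltonianCycle_waleckiCycle : (waleckiCycle i).IsHamiltonianCycle := by
  have hk := i.pos
  refine Walk.isHamiltonianCycle_of_support_tail_nodup ?_ (by simp)
    (by rw [length_waleckiCycle]; omega)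
  rw [waleckiCycle, Walk.support_copy, Walk.support_tail_ofSeq]
  refine List.nodup_range.map_on fun t ht s hs h => ?_
  simp only [List.mem_range] at ht hs
  have := waleckiVertex_injOn i ⟨by omega, by omega⟩ ⟨by omega, by omega⟩ h
  omega

lemma waleckiCycle_edges_disjoint {i j : Fin k} (hij : i ≠ j) :
    ∀ e ∈ (waleckiCycle i).edges, e ∉ (waleckiCycle j).edges := by
  simp only [edges_waleckiCycle, List.mem_map, List.mem_range]
  rintro _ ⟨t, ht, rfl⟩ ⟨s, hs, h⟩
  exact hij (eq_of_waleckiVertex_edge_eq (by omega) (by omega) h.symm)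

end Walecki

theorem stmt11_general (k : ℕ) :
    ∃ (v : Fin k → Fin (2 * k + 1))
      (c : ∀ i, (SimpleGraph.completeGraph (Fin (2 * k + 1))).Walk (v i) (v i)),
      (∀ i, (c i).IsHamiltonianCycle) ∧
      (∀ i j, i ≠ j → ∀ e ∈ (c i).edges, e ∉ (c j).edges) ∧
      (∀ e ∈ (SimpleGraph.completeGraph (Fin (2 * k + 1))).edgeSet, ∃ i, e ∈ (c i).edges) := by
  have hcard : ∑ i : Fin k, (waleckiCycle i).length =
      #(SimpleGraph.completeGraph (Fin (2 * k + 1))).edgeFinset := by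
    rw [SimpleGraph.card_edgeFinset_top_eq_card_choose_two, Fintype.card_fin, Nat.choose_two_right]
    simp only [length_waleckiCycle, sum_const, card_univ, Fintype.card_fin, smul_eq_mul]
    rw [Nat.add_sub_cancel, mul_left_comm, Nat.mul_div_cancel_left _ two_pos, mul_comm]
  refine ⟨fun _ => Fin.last (2 * k), waleckiCycle, isHamiltonianCycle_waleckiCycle,
    fun i j hij => waleckiCycle_edges_disjoint hij, fun e he => ?_⟩
  exact SimpleGraph.exists_mem_edges_of_pairwise_disjoint waleckiCycle
    (fun i => (isHamiltonianCycle_waleckiCycle i).isCycle.isTrail)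
    (fun i j hij => waleckiCycle_edges_disjoint hij) hcard he

theorem stmt11 (k : ℕ) (hk : 1 ≤ k) :
    ∃ (v : Fin k → Fin (2 * k + 1))
      (c : ∀ i, (SimpleGraph.completeGraph (Fin (2 * k + 1))).Walk (v i) (v i)),
      (∀ i, (c i).IsHamiltonianCycle) ∧
      (∀ i j, i ≠ j → ∀ e ∈ (c i).edges, e ∉ (c j).edges) ∧
      (∀ e ∈ (SimpleGraph.completeGraph (Fin (2 * k + 1))).edgeSet, ∃ i, e ∈ (c i).edges) :=
  stmt11_general k
end

section
/- For every k ≥ 1, the complete bipartite graph K_{2k,2k} contains k pairwise edge-disjoint Hamiltonian cycles. -/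
/-!
Write `a_s = inl s` and `b_t = inr t` (`s t : Fin n`) for the vertices of `K_{n,n}`. For every
offset `c` the zigzag `a_0 b_c a_1 b_{1+c} … a_{n-1} b_{n-1+c} a_0` is a Hamiltonian cycle, and
its edges `{a_s, b_t}` all satisfy `t - s ∈ {c, c - 1}`. For `n = 2k` the offsets `c = 2i + 1`,
`i < k`, give the pairwise disjoint pairs `{2i + 1, 2i}`, hence `k` edge-disjoint cycles.
-/

open SimpleGraph Walk Sum Fin.NatCast

theorem List.nodup_of_length_le_card_of_forall_mem {α : Type*} [Fintype α] {l : List α}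
    (hlen : l.length ≤ Fintype.card α) (hmem : ∀ a, a ∈ l) : l.Nodup := by
  classical
  have huniv : l.toFinset = Finset.univ := Finset.eq_univ_of_forall fun a => by simpa using hmem a
  rw [← Multiset.coe_nodup, ← Multiset.toFinset_card_eq_card_iff_nodup]
  refine le_antisymm (Multiset.toFinset_card_le _) ?_
  simpa [huniv] using hlen

namespace SimpleGraph

variable {n : ℕ} [NeZero n]

def zigzagWalk (c : Fin n) :
    (t : ℕ) → (completeBipartiteGraph (Fin n) (Fin n)).Walk (inl 0) (inl (t : Fin n))
  | 0 => nil.copy rfl (by simp)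
  | t + 1 =>
    (((zigzagWalk c t).concat (w := inr ((t : Fin n) + c)) (by simp)).concat
      (w := inl ((t : Fin n) + 1)) (by simp)).copy rfl (by simp)

theorem length_zigzagWalk (c : Fin n) (t : ℕ) : (zigzagWalk c t).length = 2 * t := by
  induction t with
  | zero => simp [zigzagWalk]
  | succ t ih => simp [zigzagWalk, ih, mul_add]

theorem support_zigzagWalk (c : Fin n) (t : ℕ) :
    (zigzagWalk c t).support =
      inl 0 :: (List.range t).flatMap fun (s : ℕ) =>
        [inr ((s : Fin n) + c), inl ((s : Fin n) + 1)] := by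
  induction t with
  | zero => simp [zigzagWalk]
  | succ t ih => simp [zigzagWalk, ih, List.range_succ]

theorem edges_zigzagWalk (c : Fin n) (t : ℕ) :
    (zigzagWalk c t).edges = (List.range t).flatMap fun (s : ℕ) =>
      [s(inl (s : Fin n), inr ((s : Fin n) + c)),
        s(inr ((s : Fin n) + c), inl ((s : Fin n) + 1))] := by
  induction t with
  | zero => simp [zigzagWalk]
  | succ t ih => simp [zigzagWalk, ih, List.range_succ]

def zigzagCycle (c : Fin n) : (completeBipartiteGraph (Fin n) (Fin n)).Walk (inl 0) (inl 0) :=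
  (zigzagWalk c n).copy rfl (by rw [Fin.natCast_self])

theorem length_zigzagCycle (c : Fin n) : (zigzagCycle c).length = 2 * n := by
  simp [zigzagCycle, length_zigzagWalk]

theorem mem_support_tail_zigzagCycle (c : Fin n) (v : Fin n ⊕ Fin n) :
    v ∈ (zigzagCycle c).support.tail := by
  rw [zigzagCycle, support_copy, support_zigzagWalk, List.tail_cons, List.mem_flatMap]
  rcases v with a | b
  · exact ⟨(a - 1).val, List.mem_range.2 (a - 1).is_lt, by simp⟩
  · exact ⟨(b - c).val, List.mem_range.2 (b - c).is_lt, by simp⟩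

theorem isHamiltonianCycle_zigzagCycle (hn : 2 ≤ n) (c : Fin n) :
    (zigzagCycle c).IsHamiltonianCycle := by
  have hnil : ¬(zigzagCycle c).Nil := by
    rw [← length_eq_zero_iff, length_zigzagCycle]; omega
  rw [isHamiltonianCycle_iff_isCycle_and_length_eq, isCycle_iff_isPath_tail_and_le_length,
    isPath_def, support_tail_of_not_nil _ hnil, length_zigzagCycle]
  have hcard : Fintype.card (Fin n ⊕ Fin n) = 2 * n := by simp [two_mul]
  -- The tail of the support meets all `2n` vertices in `2n` entries, so it repeats none.
  have hnodup : (zigzagCycle c).support.tail.Nodup := by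
    refine List.nodup_of_length_le_card_of_forall_mem ?_ (mem_support_tail_zigzagCycle c)
    simp [length_zigzagCycle, hcard]
  exact ⟨⟨hnodup, by omega⟩, hcard.symm⟩

def zigzagOffsets (c : Fin n) : Finset (Fin n) := {c, c - 1}

theorem sub_mem_zigzagOffsets_of_mem_edges {c : Fin n} {e : Sym2 (Fin n ⊕ Fin n)}
    (he : e ∈ (zigzagCycle c).edges) :
    ∃ a b, e = s(inl a, inr b) ∧ b - a ∈ zigzagOffsets c := by
  simp only [zigzagCycle, edges_copy, edges_zigzagWalk, List.mem_flatMap, List.mem_cons,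
    List.not_mem_nil, or_false] at he
  obtain ⟨s, -, rfl | rfl⟩ := he
  · exact ⟨s, s + c, rfl, by simp [zigzagOffsets]⟩
  · exact ⟨s + 1, s + c, Sym2.eq_swap, by simp [zigzagOffsets]⟩

theorem zigzagCycle_edges_disjoint {c d : Fin n}
    (hcd : Disjoint (zigzagOffsets c) (zigzagOffsets d)) :
    ∀ e ∈ (zigzagCycle c).edges, e ∉ (zigzagCycle d).edges := by
  intro e hc hd
  obtain ⟨a, b, rfl, hab⟩ := sub_mem_zigzagOffsets_of_mem_edges hc
  obtain ⟨a', b', he, hab'⟩ := sub_mem_zigzagOffsets_of_mem_edges hd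
  obtain ⟨rfl, rfl⟩ : a = a' ∧ b = b' := by simpa using he
  exact Finset.disjoint_left.mp hcd hab hab'

theorem disjoint_zigzagOffsets_natCast {a b : ℕ} (ha : a + 1 < n) (hb : b + 1 < n)
    (hab : a + 1 < b ∨ b + 1 < a) :
    Disjoint (zigzagOffsets ((a + 1 : ℕ) : Fin n)) (zigzagOffsets ((b + 1 : ℕ) : Fin n)) := by
  have hpred (m : ℕ) : ((m + 1 : ℕ) : Fin n) - 1 = m := by simp
  have hcast {m m' : ℕ} (hm : m < n) (hm' : m' < n) (h : (m : Fin n) = m') : m = m' := by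
    simpa [Fin.ext_iff, Fin.val_cast_of_lt hm, Fin.val_cast_of_lt hm'] using h
  rw [Finset.disjoint_left]
  intro x hx hx'
  simp only [zigzagOffsets, hpred, Finset.mem_insert, Finset.mem_singleton] at hx hx'
  rcases hx with rfl | rfl <;> rcases hx' with h | h <;> have := hcast (by omega) (by omega) h <;>
    omega

end SimpleGraph

theorem stmt12 (k : ℕ) (hk : 1 ≤ k) :
    ∃ (v : Fin k → Fin (2 * k) ⊕ Fin (2 * k))
      (c : ∀ i, (completeBipartiteGraph (Fin (2 * k)) (Fin (2 * k))).Walk (v i) (v i)),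
      (∀ i, (c i).IsHamiltonianCycle) ∧
      (∀ i j, i ≠ j → ∀ e ∈ (c i).edges, e ∉ (c j).edges) := by
  have : NeZero (2 * k) := ⟨by omega⟩
  refine ⟨fun _ => inl 0, fun i => zigzagCycle ((2 * i + 1 : ℕ) : Fin (2 * k)),
    fun i => isHamiltonianCycle_zigzagCycle (by omega) _, fun i j hij => ?_⟩
  apply zigzagCycle_edges_disjoint
  apply disjoint_zigzagOffsets_natCast <;> omega
end
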